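/- For r > 0 set t := r² and define the matrices A(r) := !![1, 1 − r²; 1 − r², exp(r²)] (2×2 real), B(r) := !![0, 0, −r(2 − r²), r; r(2 − r²), −r, 0, 0] (2×4 real), and C(r) := !![2, 0, 2 − 4r² + r⁴, r²; 0, 1, r², 1; 2 − 4r² + r⁴, r², 2·exp(r²), 0; r², 1, 0, exp(r²)] (4×4 real). Then A(r) is invertible and C(r) − B(r)ᵀ · A(r)⁻¹ · B(r) = Λ(t), where Λ(t) is the explicit matrix described in the context. -/

import Mathlib

open Real Matrix

noncomputable def dd (t : ℝ) : ℝ := 1 - 2*t + t^2 - Real.exp t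

noncomputable def NN (t : ℝ) : Matrix (Fin 4) (Fin 4) ℝ :=
  !![-2*Real.exp t + 2 - 2*t^2 + t^3, t*(t-2),
     4*t*Real.exp t - 4*t + 3*t^2 - t^3 - t^2*Real.exp t - 2*Real.exp t + 2, t*(t-1-Real.exp t);
     t*(t-2), -Real.exp t + 1 - t + t^2, t*(t-1-Real.exp t), -Real.exp t + 1 - t;
     4*t*Real.exp t - 4*t + 3*t^2 - t^3 - t^2*Real.exp t - 2*Real.exp t + 2, t*(t-1-Real.exp t),
     Real.exp t * (-2*Real.exp t + 2 - 2*t^2 + t^3), t*(t-2)*Real.exp t;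
     t*(t-1-Real.exp t), -Real.exp t + 1 - t, t*(t-2)*Real.exp t,
     Real.exp t * (-Real.exp t + 1 - t + t^2)]

noncomputable def Lam (t : ℝ) : Matrix (Fin 4) (Fin 4) ℝ := (1 / dd t) • NN t

/-- The covariance block `A(r)`. -/
noncomputable def Amat (r : ℝ) : Matrix (Fin 2) (Fin 2) ℝ :=
  !![1, 1 - r^2; 1 - r^2, Real.exp (r^2)]

/-- The covariance block `B(r)`. -/
noncomputable def Bmat (r : ℝ) : Matrix (Fin 2) (Fin 4) ℝ :=
  !![0, 0, -r*(2 - r^2), r; r*(2 - r^2), -r, 0, 0]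

/-- The covariance block `C(r)`. -/
noncomputable def Cmat (r : ℝ) : Matrix (Fin 4) (Fin 4) ℝ :=
  !![2, 0, 2 - 4*r^2 + r^4, r^2;
     0, 1, r^2, 1;
     2 - 4*r^2 + r^4, r^2, 2*Real.exp (r^2), 0;
     r^2, 1, 0, Real.exp (r^2)]

/-!
Since `det A(r) = -d(r²)` and `A⁻¹ = (det A)⁻¹ • adj A`, multiplying the claim by `d(r²)` leaves
`d(r²) • C + Bᵀ (adj A) B = N(r²)`, a polynomial identity in `r` and `exp (r²)`. Moreover `d(t) < 0`
for `t > 0`, because `exp t` dominates its degree-4 Taylor polynomial, which exceeds `(1 - t)²`.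
-/

theorem dd_neg {t : ℝ} (ht : 0 < t) : dd t < 0 := by
  have h := Real.sum_le_exp_of_nonneg ht.le 5
  norm_num [Finset.sum_range_succ, Nat.factorial] at h
  unfold dd
  nlinarith [sq_nonneg (t - 3 / 2), pow_pos ht 3, pow_pos ht 4]

theorem det_Amat (r : ℝ) : (Amat r).det = -dd (r ^ 2) := by
  simp only [Amat, det_fin_two_of, dd]
  ring

theorem smul_Cmat_add_transpose_mul_adjugate_mul (r : ℝ) :
    dd (r ^ 2) • Cmat r + (Bmat r)ᵀ * adjugate (Amat r) * Bmat r = NN (r ^ 2) := by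
  rw [Amat, adjugate_fin_two_of]
  ext i j
  fin_cases i <;> fin_cases j <;>
    simp [Bmat, Cmat, NN, dd, mul_apply, Fin.sum_univ_succ] <;> ring

theorem schur_complement_eq_Lam (r : ℝ) (hr : 0 < r) :
    IsUnit (Amat r) ∧ Cmat r - (Bmat r)ᵀ * (Amat r)⁻¹ * Bmat r = Lam (r^2) := by
  have hd : dd (r ^ 2) ≠ 0 := (dd_neg (by positivity)).ne
  refine ⟨by simpa [isUnit_iff_isUnit_det, det_Amat] using hd, ?_⟩
  have hinv : (Amat r)⁻¹ = -(dd (r ^ 2))⁻¹ • adjugate (Amat r) := by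
    rw [inv_def, det_Amat, Ring.inverse_eq_inv', inv_neg]
  rw [hinv, Lam, ← smul_Cmat_add_transpose_mul_adjugate_mul, smul_add, smul_smul, one_div,
    inv_mul_cancel₀ hd, one_smul, Matrix.mul_smul, Matrix.smul_mul, neg_smul, sub_neg_eq_add]
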